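/- For n ≥ 1, 1 ≤ k ≤ n, let F(κ) = H_k(κ)/H_{k−1}(κ). Then for every κ in the positive cone (0, ∞)ⁿ, the sum of the partial derivatives of F satisfies 1 ≤ Σ_{i=1}^{n} ∂F/∂κ_i(κ) ≤ k. -/

import Mathlib

/-- Normalized `j`-th elementary symmetric polynomial `H_j` of `κ ∈ ℝⁿ`,
`H_j(κ) = (n choose j)⁻¹ · Σ_{i₁<⋯<i_j} κ_{i₁}⋯κ_{i_j}`, with `H₀ = 1`. -/
noncomputable def Hsym (n j : ℕ) (κ : Fin n → ℝ) : ℝ :=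
  ((n.choose j : ℝ))⁻¹ *
    ∑ s ∈ Finset.powersetCard j (Finset.univ : Finset (Fin n)), ∏ i ∈ s, κ i

/-- The Garding cone `Γ_k = {κ ∈ ℝⁿ : H₁(κ) > 0, …, H_k(κ) > 0}`. -/
def GardingCone (n k : ℕ) : Set (Fin n → ℝ) :=
  {κ | ∀ j, 1 ≤ j → j ≤ k → 0 < Hsym n j κ}

/-!
Summing the partial derivatives of `F` is differentiating along the diagonal `(1, …, 1)`.
Along the diagonal `H_j` has derivative `j H_{j-1}`: every `(j-1)`-subset of the indices extends
to exactly `n - j + 1` subsets of size `j`. Hence `Σᵢ ∂F/∂κᵢ = k - (k-1) H_k H_{k-2} / H_{k-1}²`,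
which lies in `[1, k]` by positivity and by Newton's inequality `H_{k-2} H_k ≤ H_{k-1}²`.
Newton's inequality is proved by induction on the number of variables, using the recursion that
expresses the elementary symmetric means of `a ::ₘ s` through those of `s`.
-/

open Finset

/-- The inductive step of Newton's inequality: `w, u, v, z` stand for the means
`E_{j-1}, …, E_{j+2}` of `s`, `x` for `a` and `m` for `card s`; the three factors are then
`card s + 1` times the means `E_j`, `E_{j+2}`, `E_{j+1}` of `a ::ₘ s`. -/
theorem newton_step_inequality {K : Type*} [Field K] [LinearOrder K] [IsStrictOrderedRing K]
    {m j x w u v z : K} (hx : 0 ≤ x) (hj : 0 ≤ j) (hjm : j + 1 ≤ m)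
    (h1 : j * (w * v) ≤ j * u ^ 2) (h2 : j * (w * z) ≤ j * (u * v)) (h3 : u * z ≤ v ^ 2) :
    ((m + 1 - j) * u + j * x * w) * ((m - 1 - j) * z + (j + 2) * x * v) ≤
      ((m - j) * v + (j + 1) * x * u) ^ 2 := by
  -- RHS - LHS = (ux - v)² + (j+2)x²·j(u² - wv) + (m-1-j)x·j(uv - wz) + (m-1-j)(m+1-j)(v² - uz)
  have hA : 0 ≤ (j + 2) * x ^ 2 := by positivity
  have hB : 0 ≤ (m - 1 - j) * x := mul_nonneg (by linarith) hx
  have hC : 0 ≤ (m - 1 - j) * (m + 1 - j) := mul_nonneg (by linarith) (by linarith)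
  linarith [sq_nonneg (u * x - v), mul_le_mul_of_nonneg_left h1 hA,
    mul_le_mul_of_nonneg_left h2 hB, mul_le_mul_of_nonneg_left h3 hC]

theorem mul_le_mul_of_mul_le_sq {K : Type*} [Field K] [LinearOrder K] [IsStrictOrderedRing K]
    {a b c d : K} (hb : 0 < b) (hc : 0 < c) (hd : 0 ≤ d) (h1 : a * c ≤ b ^ 2)
    (h2 : b * d ≤ c ^ 2) : a * d ≤ b * c := by
  refine le_of_mul_le_mul_right ?_ (mul_pos hb hc)
  calc a * d * (b * c) = (a * c) * (b * d) := by ring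
    _ ≤ b ^ 2 * c ^ 2 := mul_le_mul h1 h2 (mul_nonneg hb.le hd) (sq_nonneg _)
    _ = b * c * (b * c) := by ring

namespace Multiset

variable {R : Type*} [CommSemiring R]

theorem esymm_cons_succ (a : R) (s : Multiset R) (j : ℕ) :
    (a ::ₘ s).esymm (j + 1) = s.esymm (j + 1) + a * s.esymm j := by
  simp only [esymm, powersetCard_cons, map_add, sum_add, map_map, Function.comp_def, prod_cons,
    sum_map_mul_left]

theorem esymm_eq_zero_of_card_lt {s : Multiset R} {j : ℕ} (h : card s < j) : s.esymm j = 0 := by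
  simp [esymm, powersetCard_eq_empty _ h]

theorem esymm_nonneg [PartialOrder R] [IsOrderedRing R] {s : Multiset R} (hs : ∀ x ∈ s, 0 ≤ x)
    (j : ℕ) : 0 ≤ s.esymm j :=
  sum_nonneg fun _ hx ↦ by
    obtain ⟨t, ht, rfl⟩ := mem_map.1 hx
    exact prod_nonneg fun y hy ↦ hs y (mem_of_le (mem_powersetCard.1 ht).1 hy)

theorem esymm_pos [PartialOrder R] [IsStrictOrderedRing R] {s : Multiset R}
    (hs : ∀ x ∈ s, 0 < x) {j : ℕ} (hj : j ≤ card s) : 0 < s.esymm j := by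
  induction s using Multiset.induction_on generalizing j with
  | empty => simp_all [esymm]
  | cons a s ih =>
    cases j with
    | zero => simp [esymm]
    | succ j =>
      have hs' : ∀ x ∈ s, 0 < x := fun x hx ↦ hs x (mem_cons_of_mem hx)
      rw [esymm_cons_succ]
      exact add_pos_of_nonneg_of_pos (esymm_nonneg (fun x hx ↦ (hs' x hx).le) _)
        (mul_pos (hs a (mem_cons_self a s)) (ih hs' (by simpa using hj)))

variable {K : Type*} [Field K]

noncomputable def esymmMean (s : Multiset K) (j : ℕ) : K :=
  ((card s).choose j : K)⁻¹ * s.esymm j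

theorem esymmMean_zero (s : Multiset K) : esymmMean s 0 = 1 := by
  simp [esymmMean, esymm]

theorem esymmMean_eq_zero_of_card_lt {s : Multiset K} {j : ℕ} (h : card s < j) :
    esymmMean s j = 0 := by
  simp [esymmMean, esymm_eq_zero_of_card_lt h]

section CharZero

variable [CharZero K]

theorem esymm_eq_choose_mul_esymmMean (s : Multiset K) (j : ℕ) :
    s.esymm j = (card s).choose j * esymmMean s j := by
  rcases le_or_gt j (card s) with h | h
  · rw [esymmMean, mul_inv_cancel_left₀ (by exact_mod_cast (Nat.choose_pos h).ne')]
  · simp [esymmMean, esymm_eq_zero_of_card_lt h]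

theorem card_add_one_mul_esymmMean_cons (a : K) (s : Multiset K) {j : ℕ}
    (hj : j ≤ card s + 1) :
    (card s + 1 : K) * esymmMean (a ::ₘ s) j =
      (card s + 1 - j) * esymmMean s j + j * a * esymmMean s (j - 1) := by
  cases j with
  | zero => simp [esymmMean_zero]
  | succ i =>
    rw [esymmMean, card_cons, esymm_cons_succ, esymm_eq_choose_mul_esymmMean s (i + 1),
      esymm_eq_choose_mul_esymmMean s i, Nat.add_sub_cancel]
    generalize card s = m at *
    have hC : ((m + 1).choose (i + 1) : K) ≠ 0 := by exact_mod_cast (Nat.choose_pos hj).ne'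
    have h1 : (m + 1 : K) * m.choose (i + 1) = (m + 1).choose (i + 1) * (m - i) := by
      rw [← Nat.cast_sub (by omega), show m - i = m + 1 - (i + 1) by omega]
      exact_mod_cast (mul_comm _ _).trans (Nat.choose_mul_succ_eq m (i + 1))
    have h2 : (m + 1 : K) * m.choose i = (m + 1).choose (i + 1) * (i + 1) := by
      exact_mod_cast Nat.add_one_mul_choose_eq m i
    field_simp
    push_cast
    linear_combination esymmMean s (i + 1) * h1 + a * esymmMean s i * h2

end CharZero

section Ordered

variable [LinearOrder K] [IsStrictOrderedRing K]

theorem esymmMean_nonneg {s : Multiset K} (hs : ∀ x ∈ s, 0 ≤ x) (j : ℕ) : 0 ≤ esymmMean s j :=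
  mul_nonneg (by positivity) (esymm_nonneg hs j)

theorem esymmMean_pos {s : Multiset K} (hs : ∀ x ∈ s, 0 < x) {j : ℕ} (hj : j ≤ card s) :
    0 < esymmMean s j :=
  mul_pos (inv_pos.2 (by exact_mod_cast Nat.choose_pos hj)) (esymm_pos hs hj)

theorem esymmMean_mul_esymmMean_add_two_le_sq {s : Multiset K} (hs : ∀ x ∈ s, 0 < x) (j : ℕ) :
    esymmMean s j * esymmMean s (j + 2) ≤ esymmMean s (j + 1) ^ 2 := by
  induction s using Multiset.induction_on generalizing j with
  | empty =>
    rw [esymmMean_eq_zero_of_card_lt (j := j + 2) (by simp), mul_zero]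
    positivity
  | cons a t ih =>
    have ht : ∀ x ∈ t, 0 < x := fun x hx ↦ hs x (mem_cons_of_mem hx)
    rcases le_or_gt (j + 1) (card t) with hjm | hjm
    swap
    · rw [esymmMean_eq_zero_of_card_lt (j := j + 2) (by simpa using hjm), mul_zero]
      positivity
    set E := esymmMean t
    set E' := esymmMean (a ::ₘ t)
    have hE : ∀ i, 0 ≤ E i := esymmMean_nonneg fun x hx ↦ (ht x hx).le
    have h3 := ih ht j
    have h1 : (j : K) * (E (j - 1) * E (j + 1)) ≤ j * E j ^ 2 := by
      cases j with
      | zero => simp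
      | succ i => exact mul_le_mul_of_nonneg_left (ih ht i) (by positivity)
    have h2 : (j : K) * (E (j - 1) * E (j + 2)) ≤ j * (E j * E (j + 1)) := by
      cases j with
      | zero => simp
      | succ i =>
        exact mul_le_mul_of_nonneg_left (mul_le_mul_of_mul_le_sq (esymmMean_pos ht (by omega))
          (esymmMean_pos ht (by omega)) (hE _) (ih ht i) h3) (by positivity)
    have r0 := card_add_one_mul_esymmMean_cons a t (j := j) (by omega)
    have r1 := card_add_one_mul_esymmMean_cons a t (j := j + 1) (by omega)
    have r2 := card_add_one_mul_esymmMean_cons a t (j := j + 2) (by omega)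
    simp only [Nat.cast_add, Nat.cast_ofNat, Nat.cast_one, Nat.add_sub_cancel,
      show j + 2 - 1 = j + 1 by omega] at r1 r2
    have hm : (0 : K) < card t + 1 := by positivity
    refine le_of_mul_le_mul_left ?_ (pow_pos hm 2)
    calc ((card t : K) + 1) ^ 2 * (E' j * E' (j + 2))
        = ((card t + 1) * E' j) * ((card t + 1) * E' (j + 2)) := by ring
      _ = ((card t + 1 - j) * E j + j * a * E (j - 1)) *
            ((card t - 1 - j) * E (j + 2) + (j + 2) * a * E (j + 1)) := by
          rw [r0, r2]; ring
      _ ≤ ((card t - j) * E (j + 1) + (j + 1) * a * E j) ^ 2 :=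
          newton_step_inequality (hs a (mem_cons_self a t)).le (by positivity)
            (by exact_mod_cast hjm) h1 h2 h3
      _ = ((card t : K) + 1) ^ 2 * E' (j + 1) ^ 2 := by
          rw [← mul_pow, r1]; ring

end Ordered

end Multiset

theorem Finset.sum_powersetCard_succ_sum_erase {α β : Type*} [Fintype α] [DecidableEq α]
    [AddCommMonoid β] (f : Finset α → β) (j : ℕ) :
    ∑ s ∈ powersetCard (j + 1) univ, ∑ i ∈ s, f (s.erase i) =
      (Fintype.card α - j) • ∑ t ∈ powersetCard j univ, f t := by
  calc ∑ s ∈ powersetCard (j + 1) univ, ∑ i ∈ s, f (s.erase i)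
      = ∑ p ∈ (powersetCard (j + 1) univ).sigma id, f (p.1.erase p.2) := sum_sigma' _ _ _
    _ = ∑ p ∈ (powersetCard j univ).sigma fun t ↦ tᶜ, f p.1 := by
      refine sum_nbij' (fun p ↦ ⟨p.1.erase p.2, p.2⟩) (fun p ↦ ⟨insert p.2 p.1, p.2⟩)
        ?_ ?_ ?_ ?_ fun _ _ ↦ rfl
      · simp +contextual [card_erase_of_mem]
      · simp +contextual [card_insert_of_notMem]
      · simp +contextual [insert_erase]
      · simp +contextual
    _ = ∑ t ∈ powersetCard j univ, ∑ _i ∈ tᶜ, f t := (sum_sigma' _ _ fun t _ ↦ f t).symm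
    _ = (Fintype.card α - j) • ∑ t ∈ powersetCard j univ, f t := by
      rw [smul_sum]
      refine sum_congr rfl fun t ht ↦ ?_
      rw [sum_const, card_compl, (mem_powersetCard_univ.1 ht)]

theorem Hsym_eq_esymmMean (n j : ℕ) (κ : Fin n → ℝ) :
    Hsym n j κ = (univ.val.map κ).esymmMean j := by
  rw [Multiset.esymmMean, Finset.esymm_map_val, Multiset.card_map, card_val, card_univ,
    Fintype.card_fin, Hsym]

theorem Hsym_pos {n j : ℕ} (hj : j ≤ n) {κ : Fin n → ℝ} (hκ : ∀ i, 0 < κ i) :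
    0 < Hsym n j κ := by
  rw [Hsym_eq_esymmMean]
  exact Multiset.esymmMean_pos (by simpa using hκ) (by simpa using hj)

theorem Hsym_mul_Hsym_add_two_le_sq {n : ℕ} {κ : Fin n → ℝ} (hκ : ∀ i, 0 < κ i) (j : ℕ) :
    Hsym n j κ * Hsym n (j + 2) κ ≤ Hsym n (j + 1) κ ^ 2 := by
  simp only [Hsym_eq_esymmMean]
  exact Multiset.esymmMean_mul_esymmMean_add_two_le_sq (by simpa using hκ) j

theorem differentiable_Hsym (n j : ℕ) : Differentiable ℝ (Hsym n j) := by
  unfold Hsym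
  fun_prop

theorem hasLineDerivAt_Hsym {n j : ℕ} (hj : j ≤ n) (κ : Fin n → ℝ) :
    HasLineDerivAt ℝ (Hsym n j) (j * Hsym n (j - 1) κ) κ 1 := by
  have hprod (s : Finset (Fin n)) : HasDerivAt (fun t : ℝ ↦ ∏ l ∈ s, (κ + t • 1) l)
      (∑ i ∈ s, ∏ l ∈ s.erase i, κ l) 0 := by
    simpa using HasDerivAt.fun_finsetProd (u := s) (x := (0 : ℝ))
      fun l _ ↦ (hasDerivAt_id 0).const_add (κ l)
  refine ((HasDerivAt.fun_sum fun s _ ↦ hprod s).const_mul _).congr_deriv ?_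
  cases j with
  | zero => simp
  | succ i =>
    rw [Finset.sum_powersetCard_succ_sum_erase (fun t ↦ ∏ l ∈ t, κ l), Fintype.card_fin,
      nsmul_eq_mul, Nat.add_sub_cancel, Hsym]
    have hC : (n.choose (i + 1) : ℝ) ≠ 0 := by exact_mod_cast (Nat.choose_pos hj).ne'
    have hC' : (n.choose i : ℝ) ≠ 0 := by exact_mod_cast (Nat.choose_pos (by omega)).ne'
    have h : (n.choose (i + 1) : ℝ) * (i + 1) = n.choose i * (n - i : ℕ) := by
      exact_mod_cast Nat.choose_succ_right_eq n i
    push_cast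
    field_simp
    linear_combination -(∑ t ∈ powersetCard i univ, ∏ l ∈ t, κ l) * h

theorem hasLineDerivAt_Hsym_div_Hsym_pred {n k : ℕ} (hk : 1 ≤ k) (hkn : k ≤ n)
    {κ : Fin n → ℝ} (hden : Hsym n (k - 1) κ ≠ 0) :
    HasLineDerivAt ℝ (fun κ ↦ Hsym n k κ / Hsym n (k - 1) κ)
      (k - (k - 1) * (Hsym n k κ * Hsym n (k - 2) κ) / Hsym n (k - 1) κ ^ 2) κ 1 := by
  have hquot := (hasLineDerivAt_Hsym hkn κ).div (hasLineDerivAt_Hsym (j := k - 1) (by omega) κ)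
    (by simpa using hden)
  refine hquot.congr_deriv ?_
  rw [Nat.cast_sub hk, Nat.sub_sub]
  simp only [zero_smul, add_zero, Nat.cast_one]
  field_simp

theorem sub_mul_Hsym_div_sq_mem_Icc {n k : ℕ} (hk : 1 ≤ k) (hkn : k ≤ n) {κ : Fin n → ℝ}
    (hκ : ∀ i, 0 < κ i) :
    (k : ℝ) - (k - 1) * (Hsym n k κ * Hsym n (k - 2) κ) / Hsym n (k - 1) κ ^ 2 ∈
      Set.Icc 1 (k : ℝ) := by
  obtain rfl | ⟨j, rfl⟩ : k = 1 ∨ ∃ j, k = j + 2 := by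
    rcases k with _ | _ | j <;> simp_all
  · simp
  have hH {i : ℕ} (hi : i ≤ n) : 0 < Hsym n i κ := Hsym_pos hi hκ
  have hratio_le : Hsym n (j + 2) κ * Hsym n j κ / Hsym n (j + 1) κ ^ 2 ≤ 1 := by
    rw [div_le_one (pow_pos (hH (by omega)) 2), mul_comm]
    exact Hsym_mul_Hsym_add_two_le_sq hκ j
  have hratio_nonneg : 0 ≤ Hsym n (j + 2) κ * Hsym n j κ / Hsym n (j + 1) κ ^ 2 :=
    div_nonneg (mul_pos (hH hkn) (hH (by omega))).le (sq_nonneg _)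
  have hj : (0 : ℝ) ≤ j + 1 := by positivity
  simp only [Nat.add_sub_cancel, show j + 2 - 1 = j + 1 by omega, Nat.cast_add, Nat.cast_ofNat,
    show (j + 2 - 1 : ℝ) = j + 1 by ring]
  rw [mul_div_assoc, Set.mem_Icc]
  constructor <;> linarith [mul_le_mul_of_nonneg_left hratio_le hj, mul_nonneg hj hratio_nonneg]

theorem stmt_14_general (n k : ℕ) (hk1 : 1 ≤ k) (hkn : k ≤ n)
    (F : (Fin n → ℝ) → ℝ) (hF : F = fun κ => Hsym n k κ / Hsym n (k - 1) κ) :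
    ∀ κ : Fin n → ℝ, (∀ i, 0 < κ i) →
      DifferentiableAt ℝ F κ ∧
      1 ≤ ∑ i : Fin n, fderiv ℝ F κ (Pi.single i 1) ∧
      ∑ i : Fin n, fderiv ℝ F κ (Pi.single i 1) ≤ (k : ℝ) := by
  subst hF
  intro κ hκ
  have hden : Hsym n (k - 1) κ ≠ 0 := (Hsym_pos (by omega) hκ).ne'
  have hdiff : DifferentiableAt ℝ (fun κ ↦ Hsym n k κ / Hsym n (k - 1) κ) κ := by
    simpa only [div_eq_mul_inv] using
      (differentiable_Hsym n k κ).fun_mul ((differentiable_Hsym n (k - 1) κ).fun_inv hden)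
  have htrace : ∑ i, fderiv ℝ (fun κ ↦ Hsym n k κ / Hsym n (k - 1) κ) κ (Pi.single i 1) =
      lineDeriv ℝ (fun κ ↦ Hsym n k κ / Hsym n (k - 1) κ) κ 1 := by
    rw [← map_sum, hdiff.lineDeriv_eq_fderiv]
    congr 1
    exact Finset.univ_sum_single 1
  rw [htrace, (hasLineDerivAt_Hsym_div_Hsym_pred hk1 hkn hden).lineDeriv]
  exact ⟨hdiff, sub_mul_Hsym_div_sq_mem_Icc hk1 hkn hκ⟩

/-- For `1 ≤ k ≤ n` and `F = H_k / H_{k-1}`, at every `κ` in the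
positive cone the sum of the partial derivatives of `F` satisfies
`1 ≤ Σᵢ ∂F/∂κᵢ(κ) ≤ k`. -/
theorem stmt_14 (n k : ℕ) (hn : 1 ≤ n) (hk1 : 1 ≤ k) (hkn : k ≤ n)
    (F : (Fin n → ℝ) → ℝ) (hF : F = fun κ => Hsym n k κ / Hsym n (k - 1) κ) :
    ∀ κ : Fin n → ℝ, (∀ i, 0 < κ i) →
      DifferentiableAt ℝ F κ ∧
      1 ≤ ∑ i : Fin n, fderiv ℝ F κ (Pi.single i 1) ∧
      ∑ i : Fin n, fderiv ℝ F κ (Pi.single i 1) ≤ (k : ℝ) :=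
  stmt_14_general n k hk1 hkn F hF
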